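/- arXiv:1110.3200 — 7 statements merged into one kernel-verified Lean document; each statement's English description precedes it below -/
import Mathlib

section
/- Let G be a linearly ordered abelian group, n ∈ ℕ, and a ∈ G with a ∉ nG. Then the union H₀ of all convex subgroups H of G satisfying a ∉ H + nG is itself a convex subgroup of G with a ∉ H₀ + nG; in other words, there exists a largest convex subgroup H of G such that a ∉ H + nG. -/
open Pointwise

/-- The set `nG = {n·g : g ∈ G}`. -/
def NG (G : Type*) [AddCommGroup G] (n : ℕ) : Set G :=
  {x : G | ∃ g : G, n • g = x}

/-- `H` is a convex subgroup of the linearly ordered abelian group `G`. -/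
def IsConvexSubgroup {G : Type*} [AddCommGroup G] [LinearOrder G] [IsOrderedAddMonoid G] (H : Set G) : Prop :=
  (0 : G) ∈ H ∧ (∀ x ∈ H, ∀ y ∈ H, x + y ∈ H) ∧ (∀ x ∈ H, -x ∈ H) ∧
    ∀ a ∈ H, ∀ b : G, 0 ≤ b → b ≤ a → b ∈ H

/-!
Convex subgroups of a linearly ordered group form a chain, so the union of any nonempty
family of them is again a convex subgroup. The union `H₀` is nonempty because `{0}` avoids
`a` (as `a ∉ nG`), and `a ∉ H₀ + nG` because `H₀ + nG` is the union of the sets `H + nG`.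
-/

namespace IsConvexSubgroup

variable {G : Type*} [AddCommGroup G] [LinearOrder G] [IsOrderedAddMonoid G] {H K : Set G}

lemma abs_mem_iff (hH : IsConvexSubgroup H) {x : G} : |x| ∈ H ↔ x ∈ H := by
  rcases abs_choice x with h | h
  · rw [h]
  · rw [h]
    exact ⟨fun hx => neg_neg x ▸ hH.2.2.1 _ hx, hH.2.2.1 x⟩

lemma mem_of_abs_le (hH : IsConvexSubgroup H) {x y : G} (hy : y ∈ H) (hxy : |x| ≤ |y|) :
    x ∈ H :=
  hH.abs_mem_iff.mp (hH.2.2.2 _ (hH.abs_mem_iff.mpr hy) _ (abs_nonneg x) hxy)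

lemma subset_total (hH : IsConvexSubgroup H) (hK : IsConvexSubgroup K) : H ⊆ K ∨ K ⊆ H := by
  refine or_iff_not_imp_left.mpr fun hHK => ?_
  obtain ⟨x, hxH, hxK⟩ := Set.not_subset.mp hHK
  intro y hyK
  have hyx : |y| ≤ |x| := le_of_lt <| lt_of_not_ge fun hxy => hxK (hK.mem_of_abs_le hyK hxy)
  exact hH.mem_of_abs_le hxH hyx

lemma singleton_zero : IsConvexSubgroup ({0} : Set G) := by
  refine ⟨rfl, ?_, ?_, ?_⟩
  · rintro x rfl y rfl
    simp
  · rintro x rfl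
    simp
  · rintro x rfl b hb hb'
    exact le_antisymm hb' hb

lemma sUnion {S : Set (Set G)} (hS : S.Nonempty) (hconv : ∀ H ∈ S, IsConvexSubgroup H) :
    IsConvexSubgroup (⋃₀ S) := by
  refine ⟨?_, ?_, ?_, ?_⟩
  · obtain ⟨H, hH⟩ := hS
    exact ⟨H, hH, (hconv H hH).1⟩
  · rintro x ⟨H, hH, hxH⟩ y ⟨K, hK, hyK⟩
    rcases (hconv H hH).subset_total (hconv K hK) with hHK | hKH
    · exact ⟨K, hK, (hconv K hK).2.1 x (hHK hxH) y hyK⟩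
    · exact ⟨H, hH, (hconv H hH).2.1 x hxH y (hKH hyK)⟩
  · rintro x ⟨H, hH, hxH⟩
    exact ⟨H, hH, (hconv H hH).2.2.1 x hxH⟩
  · rintro x ⟨H, hH, hxH⟩ b hb hbx
    exact ⟨H, hH, (hconv H hH).2.2.2 x hxH b hb hbx⟩

end IsConvexSubgroup

/-- For `a ∉ nG`, the union `H₀` of all convex subgroups `H` with
`a ∉ H + nG` is itself a convex subgroup satisfying `a ∉ H₀ + nG`; since it clearly
contains every such subgroup, it is the largest convex subgroup with this property. -/
theorem largest_convex_subgroup_avoiding {G : Type*} [AddCommGroup G] [LinearOrder G] [IsOrderedAddMonoid G]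
    (n : ℕ) (a : G) (ha : a ∉ NG G n) :
    IsConvexSubgroup (⋃₀ {H : Set G | IsConvexSubgroup H ∧ a ∉ H + NG G n}) ∧
    a ∉ (⋃₀ {H : Set G | IsConvexSubgroup H ∧ a ∉ H + NG G n}) + NG G n ∧
    ∀ H : Set G, IsConvexSubgroup H → a ∉ H + NG G n →
      H ⊆ ⋃₀ {H : Set G | IsConvexSubgroup H ∧ a ∉ H + NG G n} := by
  set S : Set (Set G) := {H : Set G | IsConvexSubgroup H ∧ a ∉ H + NG G n}
  have hzero : ({0} : Set G) ∈ S :=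
    ⟨IsConvexSubgroup.singleton_zero, by rwa [Set.singleton_zero, zero_add]⟩
  refine ⟨IsConvexSubgroup.sUnion ⟨_, hzero⟩ fun H hH => hH.1, ?_,
    fun H hH hHa => Set.subset_sUnion_of_mem ⟨hH, hHa⟩⟩
  rw [Set.sUnion_add, Set.mem_iUnion₂, not_exists]
  exact fun H => not_exists.mpr fun hH => hH.2
end

section
/- Let G be a linearly ordered abelian group, n ∈ ℕ, and b ∈ G. Let ⟨b⟩^conv denote the smallest convex subgroup of G containing b, and let |b| = max(b, −b). Then, as subsets of G, ⟨b⟩^conv + nG = [0, n|b|] + nG, where [0, n|b|] = {y ∈ G : 0 ≤ y ≤ n|b|}. -/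
open Pointwise

/-- `⟨b⟩^conv`: the smallest convex subgroup of `G` containing `b`. -/
def convGen {G : Type*} [AddCommGroup G] [LinearOrder G] [IsOrderedAddMonoid G] (b : G) : Set G :=
  ⋂₀ {H : Set G | IsConvexSubgroup H ∧ b ∈ H}

/-!
Every `u ∈ ⟨b⟩^conv` satisfies `|u| ≤ k|b|` for some `k`, so with `c = n|b|` it can be divided by
`c` with remainder: `u = y + m c` with `m ∈ ℤ` and `0 ≤ y ≤ c`. Since `m c = n (m |b|) ∈ nG`, the
quotient is absorbed into `nG`. Conversely `[0, n|b|] ⊆ ⟨b⟩^conv` by convexity.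
-/

lemma NG_add_NG_subset {G : Type*} [AddCommGroup G] (n : ℕ) : NG G n + NG G n ⊆ NG G n := by
  rintro _ ⟨_, ⟨g, rfl⟩, _, ⟨h, rfl⟩, rfl⟩
  exact ⟨g + h, smul_add n g h⟩

section

variable {G : Type*} [AddCommGroup G] [LinearOrder G] [IsOrderedAddMonoid G]

lemma isConvexSubgroup_setOf_abs_le_nsmul_abs (b : G) :
    IsConvexSubgroup {x : G | ∃ k : ℕ, |x| ≤ k • |b|} := by
  refine ⟨⟨0, by simp⟩, ?_, ?_, ?_⟩
  · rintro x ⟨k, hk⟩ y ⟨l, hl⟩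
    exact ⟨k + l, (abs_add_le x y).trans (add_nsmul |b| k l ▸ add_le_add hk hl)⟩
  · rintro x ⟨k, hk⟩
    exact ⟨k, (abs_neg x).symm ▸ hk⟩
  · rintro a ⟨k, hk⟩ c hc0 hca
    exact ⟨k, (abs_of_nonneg hc0).symm ▸ hca.trans ((le_abs_self a).trans hk)⟩

lemma exists_abs_le_nsmul_abs_of_mem_convGen {b u : G} (hu : u ∈ convGen b) :
    ∃ k : ℕ, |u| ≤ k • |b| :=
  hu _ ⟨isConvexSubgroup_setOf_abs_le_nsmul_abs b, 1, by simp⟩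

lemma IsConvexSubgroup.nsmul_abs_mem {H : Set G} (hH : IsConvexSubgroup H) {b : G} (hb : b ∈ H)
    (n : ℕ) : n • |b| ∈ H := by
  obtain ⟨h0, hadd, hneg, -⟩ := hH
  have habs : |b| ∈ H := by
    rcases abs_choice b with h | h <;> rw [h]
    exacts [hb, hneg b hb]
  induction n with
  | zero => simpa using h0
  | succ m ih => exact succ_nsmul |b| m ▸ hadd _ ih _ habs

lemma Icc_nsmul_abs_subset_convGen (n : ℕ) (b : G) : Set.Icc 0 (n • |b|) ⊆ convGen b := by
  rintro y ⟨hy0, hy⟩ H ⟨hH, hb⟩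
  exact hH.2.2.2 _ (hH.nsmul_abs_mem hb n) y hy0 hy

lemma exists_sub_zsmul_mem_Icc {c u : G} (hc : 0 ≤ c) {k : ℕ} (hu : |u| ≤ k • c) :
    ∃ m : ℤ, u - m • c ∈ Set.Icc 0 c := by
  obtain ⟨hlo, hhi⟩ := abs_le.1 hu
  rcases hc.eq_or_lt with rfl | hc
  · exact ⟨0, by simpa using le_antisymm (by simpa using hhi) (by simpa using hlo)⟩
  obtain ⟨m, hm, hmax⟩ := Int.exists_greatest_of_bdd (P := fun z : ℤ => z • c ≤ u)
    ⟨k, fun z hz => (zsmul_le_zsmul_iff_left hc).1 (hz.trans (by simpa using hhi))⟩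
    ⟨-k, by simpa using hlo⟩
  refine ⟨m, sub_nonneg.2 hm, ?_⟩
  by_contra! hlt
  have := hmax (m + 1) (by rw [add_zsmul, one_zsmul]; exact (lt_sub_iff_add_lt'.1 hlt).le)
  omega

lemma convGen_subset_Icc_add_NG {n : ℕ} (hn : 0 < n) (b : G) :
    convGen b ⊆ Set.Icc 0 (n • |b|) + NG G n := by
  intro u hu
  obtain ⟨k, hk⟩ := exists_abs_le_nsmul_abs_of_mem_convGen hu
  have hk' : |u| ≤ k • (n • |b|) :=
    hk.trans (nsmul_le_nsmul_right (le_self_nsmul (abs_nonneg b) hn.ne') k)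
  obtain ⟨m, hm⟩ := exists_sub_zsmul_mem_Icc (nsmul_nonneg (abs_nonneg b) n) hk'
  refine ⟨_, hm, _, ⟨m • |b|, rfl⟩, ?_⟩
  rw [smul_comm n m]
  exact sub_add_cancel u _

end

/-- `⟨b⟩^conv + nG = [0, n|b|] + nG`. -/
theorem convGen_add_eq_Icc_add {G : Type*} [AddCommGroup G] [LinearOrder G] [IsOrderedAddMonoid G]
    (n : ℕ) (hn : 0 < n) (b : G) :
    convGen b + NG G n = Set.Icc (0 : G) (n • |b|) + NG G n := by
  refine (Set.add_subset_add_right (Icc_nsmul_abs_subset_convGen n b)).antisymm' ?_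
  calc convGen b + NG G n ⊆ Set.Icc 0 (n • |b|) + NG G n + NG G n :=
        Set.add_subset_add_right (convGen_subset_Icc_add_NG hn b)
    _ = Set.Icc 0 (n • |b|) + (NG G n + NG G n) := add_assoc _ _ _
    _ ⊆ Set.Icc 0 (n • |b|) + NG G n := Set.add_subset_add_left (NG_add_NG_subset n)
end

section
/- Let G be a linearly ordered abelian group, n ∈ ℕ with n ≥ 2, and a ∈ G. Then H_{n,a} = ⋃_{p^r ∥ n} H_{p^r,a}, where the union is over all pairs (p, r) with p prime, r ∈ ℕ, p^r ∣ n and p^{r+1} ∤ n. -/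
open Pointwise

/-- `H_{n,a}`: the largest convex subgroup `H` with `a ∉ H + nG` (it is the union of
all such subgroups), and `{0}` if `a ∈ nG` (in which case the union is empty). -/
def Hna {G : Type*} [AddCommGroup G] [LinearOrder G] [IsOrderedAddMonoid G] (n : ℕ) (a : G) : Set G :=
  {0} ∪ ⋃₀ {H : Set G | IsConvexSubgroup H ∧ a ∉ H + NG G n}

/-- `H'_{n,b} = ⋃ {H_{n,a} : a ∈ G, b ∉ H_{n,a}}`, with `{0}` for the empty union. -/
def Hnb' {G : Type*} [AddCommGroup G] [LinearOrder G] [IsOrderedAddMonoid G] (n : ℕ) (b : G) : Set G :=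
  {0} ∪ ⋃₀ {H : Set G | ∃ a : G, H = Hna n a ∧ b ∉ Hna n a}

/-- `G^{[n]}_C = ⋂ {H + nG : H convex subgroup, H ⊋ C}`, with `G` for the empty
intersection. -/
def Gbr {G : Type*} [AddCommGroup G] [LinearOrder G] [IsOrderedAddMonoid G] (C : Set G) (n : ℕ) : Set G :=
  ⋂₀ {S : Set G | ∃ H : Set G, IsConvexSubgroup H ∧ C ⊂ H ∧ S = H + NG G n}


/-! Since `H` is a subgroup, `a ∈ H + nG` says that the class of `a` is divisible by `n` in
`G / H`, and an element of an abelian group is divisible by `n` as soon as it is divisible by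
each `p ^ r ∥ n`: for coprime `s, t` with `s u + t v = 1`, from `a = h₁ + s g₁ = h₂ + t g₂` one
gets `a = (s u h₂ + t v h₁) + s t (u g₂ + v g₁)`. Hence `a ∉ H + nG` iff `a ∉ H + p ^ r G` for
some `p ^ r ∥ n`, which is the theorem, as `H_{n,a}` is the union of the convex subgroups `H`
with `a ∉ H + nG`. -/

section Divisibility

variable {G : Type*} [AddCommGroup G]

lemma mem_add_NG_iff {H : Set G} {n : ℕ} {a : G} :
    a ∈ H + NG G n ↔ ∃ h ∈ H, ∃ g : G, h + n • g = a := by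
  simp only [Set.mem_add, NG, Set.mem_ofPred_eq]
  constructor
  · rintro ⟨h, hh, _, ⟨g, rfl⟩, rfl⟩
    exact ⟨h, hh, g, rfl⟩
  · rintro ⟨h, hh, g, rfl⟩
    exact ⟨h, hh, n • g, ⟨g, rfl⟩, rfl⟩

lemma NG_subset_NG_of_dvd {m n : ℕ} (h : m ∣ n) : NG G n ⊆ NG G m := by
  obtain ⟨k, rfl⟩ := h
  rintro _ ⟨g, rfl⟩
  exact ⟨k • g, (mul_smul m k g).symm⟩

lemma mem_add_NG_one (H : AddSubgroup G) (a : G) : a ∈ (H : Set G) + NG G 1 :=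
  mem_add_NG_iff.2 ⟨0, H.zero_mem, a, by rw [one_smul, zero_add]⟩

lemma mem_add_NG_mul_of_coprime (H : AddSubgroup G) {s t : ℕ} (hst : s.Coprime t) {a : G}
    (hs : a ∈ (H : Set G) + NG G s) (ht : a ∈ (H : Set G) + NG G t) :
    a ∈ (H : Set G) + NG G (s * t) := by
  obtain ⟨h₁, hh₁, g₁, ha₁⟩ := mem_add_NG_iff.1 hs
  obtain ⟨h₂, hh₂, g₂, ha₂⟩ := mem_add_NG_iff.1 ht
  have hbezout : (s : ℤ) * s.gcdA t + t * s.gcdB t = 1 := by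
    rw [← Nat.gcd_eq_gcd_ab, hst.gcd_eq_one, Nat.cast_one]
  refine mem_add_NG_iff.2 ⟨(s * s.gcdA t : ℤ) • h₂ + (t * s.gcdB t : ℤ) • h₁,
    H.add_mem (H.zsmul_mem hh₂ _) (H.zsmul_mem hh₁ _), s.gcdA t • g₂ + s.gcdB t • g₁, ?_⟩
  rw [eq_sub_of_add_eq ha₁, eq_sub_of_add_eq ha₂, ← natCast_zsmul, ← natCast_zsmul,
    ← natCast_zsmul]
  push_cast
  match_scalars
  · linear_combination hbezout
  all_goals ring

lemma mem_add_NG_of_forall_mem_add_NG_ordProj (H : AddSubgroup G) {n : ℕ} (hn : n ≠ 0) {a : G}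
    (ha : ∀ p ∈ n.primeFactors, a ∈ (H : Set G) + NG G (p ^ n.factorization p)) :
    a ∈ (H : Set G) + NG G n := by
  suffices ∀ m, m ∣ n → a ∈ (H : Set G) + NG G m from this n dvd_rfl
  intro m
  induction m using Nat.recOnPosPrimePosCoprime with
  | prime_pow p k hp hk =>
    intro hpk
    have hp_mem : p ∈ n.primeFactors :=
      Nat.mem_primeFactors.2 ⟨hp, (dvd_pow_self p hk.ne').trans hpk, hn⟩
    refine Set.add_subset_add_left (NG_subset_NG_of_dvd ?_) (ha p hp_mem)
    exact pow_dvd_pow p ((hp.pow_dvd_iff_le_factorization hn).1 hpk)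
  | zero => exact fun h0 => absurd (zero_dvd_iff.1 h0) hn
  | one => exact fun _ => mem_add_NG_one H a
  | coprime s t _ _ hst ihs iht =>
    exact fun hst_dvd => mem_add_NG_mul_of_coprime H hst
      (ihs (dvd_of_mul_right_dvd hst_dvd)) (iht (dvd_of_mul_left_dvd hst_dvd))

end Divisibility

section ConvexSubgroups

variable {G : Type*} [AddCommGroup G] [LinearOrder G] [IsOrderedAddMonoid G]

def IsConvexSubgroup.toAddSubgroup {H : Set G} (hH : IsConvexSubgroup H) : AddSubgroup G where
  carrier := H
  zero_mem' := hH.1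
  add_mem' hx hy := hH.2.1 _ hx _ hy
  neg_mem' hx := hH.2.2.1 _ hx

lemma Hna_subset_Hna_of_dvd {m n : ℕ} (h : m ∣ n) (a : G) : Hna m a ⊆ Hna n a := by
  rintro x (hx | ⟨H, ⟨hH, ham⟩, hxH⟩)
  · exact Or.inl hx
  · exact Or.inr ⟨H, ⟨hH, fun han => ham (Set.add_subset_add_left (NG_subset_NG_of_dvd h) han)⟩,
      hxH⟩

lemma exists_mem_Hna_ordProj {n : ℕ} (hn : 2 ≤ n) {a x : G} (hx : x ∈ Hna n a) :
    ∃ p ∈ n.primeFactors, x ∈ Hna (p ^ n.factorization p) a := by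
  rcases hx with hx | ⟨H, ⟨hH, han⟩, hxH⟩
  · obtain ⟨p, hp⟩ := Nat.nonempty_primeFactors.2 hn
    exact ⟨p, hp, Or.inl hx⟩
  · have hn0 : n ≠ 0 := by omega
    obtain ⟨p, hp, hap⟩ : ∃ p ∈ n.primeFactors, a ∉ H + NG G (p ^ n.factorization p) := by
      by_contra! h
      exact han (mem_add_NG_of_forall_mem_add_NG_ordProj hH.toAddSubgroup hn0 h)
    exact ⟨p, hp, Or.inr ⟨H, ⟨hH, hap⟩, hxH⟩⟩

end ConvexSubgroups

/-- For `n ≥ 2` and `a ∈ G`, `H_{n,a} = ⋃_{p^r ∥ n} H_{p^r,a}`, where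
the union is over all pairs `(p, r)` with `p` a prime divisor of `n` and `p^r` the
maximal power of `p` dividing `n`. -/
theorem Hna_eq_union_of_prime_powers {G : Type*} [AddCommGroup G] [LinearOrder G] [IsOrderedAddMonoid G]
    (n : ℕ) (hn : 2 ≤ n) (a : G) :
    Hna n a =
      ⋃ pr ∈ {pr : ℕ × ℕ |
          pr.1.Prime ∧ pr.1 ∣ n ∧ pr.1 ^ pr.2 ∣ n ∧ ¬ pr.1 ^ (pr.2 + 1) ∣ n},
        Hna (pr.1 ^ pr.2) a := by
  refine Set.Subset.antisymm (fun x hx => ?_)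
    (Set.iUnion₂_subset fun pr hpr => Hna_subset_Hna_of_dvd hpr.2.2.1 a)
  obtain ⟨p, hp, hxp⟩ := exists_mem_Hna_ordProj hn hx
  obtain ⟨hp_prime, hpn, hn0⟩ := Nat.mem_primeFactors.1 hp
  exact Set.mem_biUnion (x := (p, n.factorization p))
    ⟨hp_prime, hpn, Nat.ordProj_dvd n p, Nat.pow_succ_factorization_not_dvd hn0 hp_prime⟩ hxp
end

section
/- Let G be a linearly ordered abelian group, n ∈ ℕ, and H ⊆ G any convex subgroup. Then H + nG = ⋂{H_{n,a} + nG : a ∈ G, H ⊆ H_{n,a}}, where the intersection over the empty family is G. -/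
open Pointwise

section

variable {G : Type*} [AddCommGroup G] [LinearOrder G] [IsOrderedAddMonoid G] {n : ℕ} {a : G}

lemma subset_Hna_of_notMem_add_NG {H : Set G} (hH : IsConvexSubgroup H)
    (ha : a ∉ H + NG G n) : H ⊆ Hna n a :=
  fun _ hx => Or.inr ⟨H, ⟨hH, ha⟩, hx⟩

/-- Every convex subgroup in the union defining `H_{n,a}` avoids `a - nG`, and `{0}` contributes
only `nG`. -/
lemma mem_Hna_add_NG_self_iff : a ∈ Hna n a + NG G n ↔ a ∈ NG G n := by
  constructor
  · rintro ⟨h, hh | ⟨H, ⟨-, haH⟩, hH⟩, g, hg, rfl⟩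
    · simpa [Set.mem_singleton_iff.mp hh] using hg
    · exact absurd ⟨h, hH, g, hg, rfl⟩ haH
  · exact fun ha => Set.subset_add_right (NG G n) (Or.inl rfl) ha

end

theorem add_NG_eq_sInter_Hna_add_general {G : Type*} [AddCommGroup G] [LinearOrder G] [IsOrderedAddMonoid G]
    (n : ℕ) (H : Set G) (hH : IsConvexSubgroup H) :
    H + NG G n = ⋂₀ {S : Set G | ∃ a : G, H ⊆ Hna n a ∧ S = Hna n a + NG G n} := by
  refine Set.Subset.antisymm ?_ fun a ha => ?_
  · rintro x hx _ ⟨a, hHa, rfl⟩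
    exact Set.add_subset_add_right hHa hx
  · by_contra haH
    have haNG : a ∈ NG G n :=
      mem_Hna_add_NG_self_iff.mp (ha _ ⟨a, subset_Hna_of_notMem_add_NG hH haH, rfl⟩)
    exact haH (Set.subset_add_right (NG G n) hH.1 haNG)

/-- For any convex subgroup `H` and `n ∈ ℕ` (positive):
`H + nG = ⋂ {H_{n,a} + nG : a ∈ G, H ⊆ H_{n,a}}`, where the intersection over the
empty family is all of `G` (`Set.univ`). -/
theorem add_NG_eq_sInter_Hna_add {G : Type*} [AddCommGroup G] [LinearOrder G] [IsOrderedAddMonoid G]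
    (n : ℕ) (hn : 0 < n) (H : Set G) (hH : IsConvexSubgroup H) :
    H + NG G n = ⋂₀ {S : Set G | ∃ a : G, H ⊆ Hna n a ∧ S = Hna n a + NG G n} :=
  add_NG_eq_sInter_Hna_add_general n H hH
end

section
/- Let G be a linearly ordered abelian group, n ∈ ℕ, a ∈ G, and let C ⊆ G be a subgroup which is a union of groups of the form H_{n,b} for b ranging over some subset of G (in particular, C could be H_{n,b} or H'_{n,b} for some b ∈ G). If a ∉ C, then C ⊆ H'_{n,a}. Conversely, if a ≠ 0 and C ⊆ H'_{n,a}, then a ∉ C. -/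
open Pointwise

theorem mem_Hnb'_of_mem_Hna {G : Type*} [AddCommGroup G] [LinearOrder G] [IsOrderedAddMonoid G]
    {n : ℕ} {a b x : G} (hx : x ∈ Hna n b) (ha : a ∉ Hna n b) : x ∈ Hnb' n a :=
  Or.inr ⟨Hna n b, ⟨b, rfl, ha⟩, hx⟩

theorem notMem_Hnb'_self {G : Type*} [AddCommGroup G] [LinearOrder G] [IsOrderedAddMonoid G]
    {n : ℕ} {a : G} (ha : a ≠ 0) : a ∉ Hnb' n a := by
  rintro (h | ⟨_, ⟨b, rfl, hab⟩, haH⟩)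
  · exact ha h
  · exact hab haH

theorem subset_Hnb'_iff_general {G : Type*} [AddCommGroup G] [LinearOrder G] [IsOrderedAddMonoid G]
    (n : ℕ) (a : G) (C : Set G)
    (hC : ∃ T : Set G, T.Nonempty ∧ C = ⋃ b ∈ T, Hna n b) :
    (a ∉ C → C ⊆ Hnb' n a) ∧
    (a ≠ 0 → C ⊆ Hnb' n a → a ∉ C) := by
  obtain ⟨T, -, rfl⟩ := hC
  refine ⟨fun ha x hx => ?_, fun ha0 hsub haC => notMem_Hnb'_self ha0 (hsub haC)⟩
  obtain ⟨b, hb, hxb⟩ := Set.mem_iUnion₂.mp hx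
  exact mem_Hnb'_of_mem_Hna hxb fun hab => ha (Set.mem_biUnion hb hab)

/-- Let `C` be a subgroup of `G` which is a union of groups of the
form `H_{n,b}` with `b` ranging over some (necessarily nonempty, since `C` is a
subgroup) subset of `G`. If `a ∉ C` then `C ⊆ H'_{n,a}`; conversely, if `a ≠ 0` and
`C ⊆ H'_{n,a}`, then `a ∉ C`. -/
theorem subset_Hnb'_iff {G : Type*} [AddCommGroup G] [LinearOrder G] [IsOrderedAddMonoid G]
    (n : ℕ) (hn : 0 < n) (a : G) (C : Set G)
    (hC : ∃ T : Set G, T.Nonempty ∧ C = ⋃ b ∈ T, Hna n b) :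
    (a ∉ C → C ⊆ Hnb' n a) ∧
    (a ≠ 0 → C ⊆ Hnb' n a → a ∉ C) :=
  subset_Hnb'_iff_general n a C hC
end

section
/- Let G be a linearly ordered abelian group and H ⊆ G a convex subgroup such that the quotient G/H is discrete, i.e., there exists e ∈ G with e > 0, e ∉ H, and such that for every b ∈ G with b > 0 and b ∉ H, either b − e ∈ H or e < b. Then for every n ∈ ℕ with n ≥ 2, any such e satisfies H = H_{n,e} and H = H'_{n,e}; in particular, for every n ≥ 2 there exists a ∈ G with H = H_{n,a}, and there exists a ∈ G with H = H'_{n,a}. -/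
open Pointwise

/-!
Convex subgroups form a chain, and `e` lies in every convex subgroup strictly above `H`
(its class is the least positive element of `G/H`); hence `H` is the largest convex subgroup
not containing `e`. For `n ≥ 2`, the least positive element of `G/H` is not `n` times
anything, i.e. `e ∉ H + nG`. So `H` is the largest convex `K` with `e ∉ K + nG`, which is
`H_{n,e}`; and each `H_{n,a}` not containing `e` is a union of convex subgroups not
containing `e`, hence lies in `H`, which gives `H'_{n,e} = H`.
-/

lemma zero_mem_NG {G : Type*} [AddCommGroup G] (n : ℕ) : (0 : G) ∈ NG G n :=
  ⟨0, smul_zero n⟩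

lemma subset_add_NG {G : Type*} [AddCommGroup G] (K : Set G) (n : ℕ) : K ⊆ K + NG G n :=
  Set.subset_add_left K (zero_mem_NG n)

section ConvexSubgroups

variable {G : Type*} [AddCommGroup G] [LinearOrder G] [IsOrderedAddMonoid G]

namespace IsConvexSubgroup

variable {K H : Set G} {x y : G}

lemma zero_mem (hK : IsConvexSubgroup K) : (0 : G) ∈ K := hK.1

lemma add_mem (hK : IsConvexSubgroup K) (hx : x ∈ K) (hy : y ∈ K) : x + y ∈ K :=
  hK.2.1 x hx y hy

lemma neg_mem (hK : IsConvexSubgroup K) (hx : x ∈ K) : -x ∈ K := hK.2.2.1 x hx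

lemma sub_mem (hK : IsConvexSubgroup K) (hx : x ∈ K) (hy : y ∈ K) : x - y ∈ K := by
  simpa [sub_eq_add_neg] using hK.add_mem hx (hK.neg_mem hy)

lemma mem_of_le (hK : IsConvexSubgroup K) (hx : x ∈ K) (hy : 0 ≤ y) (hyx : y ≤ x) : y ∈ K :=
  hK.2.2.2 x hx y hy hyx

lemma nsmul_mem (hK : IsConvexSubgroup K) (hx : x ∈ K) (m : ℕ) : m • x ∈ K := by
  induction m with
  | zero => simpa using hK.zero_mem
  | succ k ih => simpa [succ_nsmul] using hK.add_mem ih hx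

lemma abs_mem_iff_s15 (hK : IsConvexSubgroup K) : |x| ∈ K ↔ x ∈ K := by
  rcases abs_choice x with h | h <;> rw [h]
  exact ⟨fun hx => by simpa using hK.neg_mem hx, hK.neg_mem⟩

lemma total (hK : IsConvexSubgroup K) (hH : IsConvexSubgroup H) : K ⊆ H ∨ H ⊆ K := by
  by_contra! hc
  obtain ⟨k, hkK, hkH⟩ := Set.not_subset.mp hc.1
  obtain ⟨h, hhH, hhK⟩ := Set.not_subset.mp hc.2
  rcases le_total |k| |h| with hle | hle
  · exact hkH (hH.abs_mem_iff_s15.1 (hH.mem_of_le (hH.abs_mem_iff_s15.2 hhH) (abs_nonneg k) hle))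
  · exact hhK (hK.abs_mem_iff_s15.1 (hK.mem_of_le (hK.abs_mem_iff_s15.2 hkK) (abs_nonneg h) hle))

lemma pos_add_of_notMem (hK : IsConvexSubgroup K) (hx : 0 < x) (hxK : x ∉ K) (hy : y ∈ K) :
    0 < x + y := by
  by_contra! hxy
  exact hxK (hK.mem_of_le (hK.neg_mem hy) hx.le (le_neg_iff_add_nonpos_right.2 hxy))

end IsConvexSubgroup

lemma subset_Hna {K : Set G} {n : ℕ} {a : G} (hK : IsConvexSubgroup K)
    (ha : a ∉ K + NG G n) : K ⊆ Hna n a :=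
  fun _ hx => Or.inr (Set.mem_sUnion_of_mem hx ⟨hK, ha⟩)

lemma Hna_subset {S : Set G} {n : ℕ} {a : G} (hS : 0 ∈ S)
    (h : ∀ K, IsConvexSubgroup K → a ∉ K + NG G n → K ⊆ S) : Hna n a ⊆ S :=
  Set.union_subset (Set.singleton_subset_iff.2 hS) (Set.sUnion_subset fun K hK => h K hK.1 hK.2)

lemma Hna_subset_Hnb' {n : ℕ} {a b : G} (hb : b ∉ Hna n a) : Hna n a ⊆ Hnb' n b :=
  fun _ hx => Or.inr (Set.mem_sUnion_of_mem hx ⟨a, rfl, hb⟩)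

lemma Hnb'_subset {S : Set G} {n : ℕ} {b : G} (hS : 0 ∈ S)
    (h : ∀ a, b ∉ Hna n a → Hna n a ⊆ S) : Hnb' n b ⊆ S := by
  refine Set.union_subset (Set.singleton_subset_iff.2 hS) (Set.sUnion_subset ?_)
  rintro _ ⟨a, rfl, hb⟩
  exact h a hb

lemma subset_of_notMem {H K : Set G} {e : G} (hH : IsConvexSubgroup H) (he1 : 0 < e)
    (he3 : ∀ b : G, 0 < b → b ∉ H → (b - e ∈ H ∨ e < b))
    (hK : IsConvexSubgroup K) (heK : e ∉ K) : K ⊆ H := by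
  rcases hK.total hH with hKH | hHK
  · exact hKH
  intro x hxK
  by_contra hxH
  have hx : 0 < |x| := abs_pos.2 (by rintro rfl; exact hxH hH.zero_mem)
  have habsK : |x| ∈ K := hK.abs_mem_iff_s15.2 hxK
  rcases he3 |x| hx (by rwa [hH.abs_mem_iff_s15]) with hxe | hex
  · exact heK (by simpa using hK.sub_mem habsK (hHK hxe))
  · exact heK (hK.mem_of_le habsK he1.le hex.le)

lemma notMem_add_NG {H : Set G} {e : G} (hH : IsConvexSubgroup H) (he1 : 0 < e) (he2 : e ∉ H)
    (he3 : ∀ b : G, 0 < b → b ∉ H → (b - e ∈ H ∨ e < b)) {n : ℕ} (hn : 2 ≤ n) :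
    e ∉ H + NG G n := by
  rintro ⟨h, hh, _, ⟨g, rfl⟩, hsum⟩
  beta_reduce at hsum
  obtain ⟨m, rfl⟩ : ∃ m, n = m + 1 := ⟨n - 1, by omega⟩
  have hm : m ≠ 0 := by omega
  have hgH : g ∉ H := fun hg => he2 (hsum ▸ hH.add_mem hh (hH.nsmul_mem hg _))
  have hg : 0 < g := by
    have hpos := hH.pos_add_of_notMem he1 he2 (hH.neg_mem hh)
    rw [← hsum, add_neg_cancel_comm] at hpos
    exact (nsmul_pos_iff (Nat.succ_ne_zero m)).1 hpos
  rcases he3 g hg hgH with hge | heg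
  · -- `g ≡ e` modulo `H`, so `m • e ≡ 0`
    have hme : m • e = -(h + (m + 1) • (g - e)) := by
      rw [smul_sub, eq_sub_of_add_eq' hsum, succ_nsmul]; abel
    exact he2 (hH.mem_of_le (hme ▸ hH.neg_mem (hH.add_mem hh (hH.nsmul_mem hge _)))
      he1.le (le_self_nsmul he1.le hm))
  · -- `m • g ≥ g` lies above `H`, yet `m • g + h = e - g < 0`
    have hgm : g ≤ m • g := le_self_nsmul hg.le hm
    have hmgH : m • g ∉ H := fun hmg => hgH (hH.mem_of_le hmg hg.le hgm)
    have hpos := hH.pos_add_of_notMem (hg.trans_le hgm) hmgH hh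
    have hmg : m • g + h = e - g := by rw [← hsum, succ_nsmul]; abel
    exact (hmg ▸ hpos).not_gt (sub_neg.2 heg)

end ConvexSubgroups

/-- Let `H` be a convex subgroup such that `G/H` is discrete, with
`e` a preimage of the minimal positive element of `G/H` (i.e. `e > 0`, `e ∉ H`, and
every positive `b ∉ H` satisfies `b - e ∈ H` or `e < b`). Then for every `n ≥ 2` one
has `H = H_{n,e}` and `H = H'_{n,e}`; in particular `H` is of the form `H_{n,a}` and
of the form `H'_{n,a}` for some `a ∈ G`. -/
theorem discrete_quotient_eq_Hna_and_Hnb' {G : Type*} [AddCommGroup G] [LinearOrder G] [IsOrderedAddMonoid G]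
    (H : Set G) (hH : IsConvexSubgroup H) (e : G)
    (he1 : 0 < e) (he2 : e ∉ H)
    (he3 : ∀ b : G, 0 < b → b ∉ H → (b - e ∈ H ∨ e < b))
    (n : ℕ) (hn : 2 ≤ n) :
    H = Hna n e ∧ H = Hnb' n e ∧
    (∃ a : G, H = Hna n a) ∧ (∃ a : G, H = Hnb' n a) := by
  have hHna : H = Hna n e :=
    (subset_Hna hH (notMem_add_NG hH he1 he2 he3 hn)).antisymm <|
      Hna_subset hH.zero_mem fun K hK heK =>
        subset_of_notMem hH he1 he3 hK fun he => heK (subset_add_NG K n he)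
  have hHnb : H = Hnb' n e :=
    (hHna.subset.trans (Hna_subset_Hnb' (hHna ▸ he2))).antisymm <|
      Hnb'_subset hH.zero_mem fun _ hea => Hna_subset hH.zero_mem fun K hK haK =>
        subset_of_notMem hH he1 he3 hK fun he => hea (subset_Hna hK haK he)
  exact ⟨hHna, hHnb, ⟨e, hHna⟩, ⟨e, hHnb⟩⟩
end

section
/- Let G be an abelian group, G' ⊆ G a subgroup, ν ∈ ℕ₀, and let H₀, H₁, …, H_ν be subgroups of G and a₀, a₁, …, a_ν ∈ G such that Hᵢ + aᵢ ⊆ H₀ + a₀ for all i ∈ {1, …, ν}, and (Hᵢ + aᵢ) ∩ (Hⱼ + aⱼ) = ∅ for all i, j ∈ {1, …, ν} with i ≠ j. Set X := (H₀ + a₀) ∖ ⋃_{i=1}^{ν}(Hᵢ + aᵢ). Then for every x ∈ G, x ∈ X + G' if and only if both: (1) x − a₀ ∈ H₀ + G', and (2) the sum Σᵢ ((H₀ ∩ G') : (Hᵢ ∩ G'))⁻¹, taken over those i ∈ {1, …, ν} with x − aᵢ ∈ Hᵢ + G', is strictly less than 1; here (A : B) denotes the index of B in A and ∞⁻¹ is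 interpreted as 0. -/
open Pointwise
open scoped Classical

/-!
Pick `c ∈ H₀ + a₀` with `x - c ∈ G'` (possible exactly when `x - a₀ ∈ H₀ + G'`). Then
`x ∈ X + G'` iff some point of the coset `c + K`, `K = H₀ ∩ G'`, avoids every `Hᵢ + aᵢ`. The
coset `Hᵢ + aᵢ` meets `c + K` iff `x - aᵢ ∈ Hᵢ + G'`, and then in a coset of `Hᵢ ∩ G'`. So the
question is whether finitely many pairwise disjoint cosets of subgroups `Lᵢ ≤ K` cover `K`, which
happens iff `∑ (K : Lᵢ)⁻¹ ≥ 1`: one direction is B. H. Neumann's bound for coverings, the other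
is a count of points in a finite quotient of `K`.
-/

theorem Set.mem_add_singleton_iff_sub_mem {G : Type*} [AddGroup G] {s : Set G} {a y : G} :
    y ∈ s + {a} ↔ y - a ∈ s := by
  simp [Set.add_singleton, Set.image_add_right, sub_eq_add_neg]

theorem Set.sub_mem_add_iff_mem_add_singleton_add {G : Type*} [AddCommGroup G] {s t : Set G}
    {a x : G} :
    x - a ∈ s + t ↔ x ∈ s + {a} + t := by
  rw [add_right_comm, Set.mem_add_singleton_iff_sub_mem]

namespace AddSubgroup

section AddGroup

variable {G : Type*} [AddGroup G] {ι : Type*} {s : Finset ι} {L : ι → AddSubgroup G} {d : ι → G}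

theorem preimage_vadd_map_eq_vadd {N : Type*} [AddGroup N] (f : G →+ N) {K : AddSubgroup G}
    (hK : f.ker ≤ K) (g : G) :
    f ⁻¹' (f g +ᵥ (K.map f : Set N)) = g +ᵥ (K : Set G) := by
  ext x
  simp only [Set.mem_preimage, Set.mem_vadd_set_iff_neg_vadd_mem, vadd_eq_add, SetLike.mem_coe]
  rw [← map_neg, ← map_add, ← mem_comap, comap_map_eq_self hK]

theorem sum_inv_index_lt_one_of_pairwiseDisjoint_of_finite [Finite G]
    (hdisj : (s : Set ι).PairwiseDisjoint fun i ↦ d i +ᵥ (L i : Set G))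
    {y : G} (hy : y ∉ ⋃ i ∈ s, d i +ᵥ (L i : Set G)) :
    ∑ i ∈ s, ((L i).index : ℚ)⁻¹ < 1 := by
  have hcard : ∑ i ∈ s, Nat.card (L i) < Nat.card G :=
    calc ∑ i ∈ s, Nat.card (L i) = (⋃ i ∈ s, d i +ᵥ (L i : Set G)).ncard := by
          rw [← Finset.set_biUnion_coe, Set.Finite.ncard_biUnion s.finite_toSet
            (fun _ _ ↦ Set.toFinite _) hdisj, finsum_mem_coe_finset]
          simp only [Set.ncard_vadd_set]; rfl
      _ < Nat.card G := by
          rw [← Set.ncard_univ]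
          exact Set.ncard_lt_ncard (Set.ssubset_univ_iff.mpr fun h ↦ hy (h ▸ trivial))
  have hG : (0 : ℚ) < Nat.card G := by exact_mod_cast Nat.card_pos
  calc ∑ i ∈ s, ((L i).index : ℚ)⁻¹ = (∑ i ∈ s, Nat.card (L i) : ℕ) / Nat.card G := by
        rw [Nat.cast_sum, Finset.sum_div]
        refine Finset.sum_congr rfl fun i _ ↦ ?_
        rw [← (L i).card_mul_index, Nat.cast_mul]
        have : (Nat.card (L i) : ℚ) ≠ 0 := by exact_mod_cast Nat.card_pos.ne'
        field_simp
    _ < 1 := by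
        rw [div_lt_one hG]
        exact_mod_cast hcard

theorem sum_inv_index_lt_one_of_pairwiseDisjoint
    (hdisj : (s : Set ι).PairwiseDisjoint fun i ↦ d i +ᵥ (L i : Set G))
    {y : G} (hy : y ∉ ⋃ i ∈ s, d i +ᵥ (L i : Set G)) :
    ∑ i ∈ s, ((L i).index : ℚ)⁻¹ < 1 := by
  -- Infinite-index terms vanish; the other cosets are unions of cosets of the normal core `D` of
  -- their intersection, so they can be counted in the finite group `G ⧸ D`.
  set T := s.filter fun i ↦ (L i).FiniteIndex
  have hsum : ∑ i ∈ T, ((L i).index : ℚ)⁻¹ = ∑ i ∈ s, ((L i).index : ℚ)⁻¹ :=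
    Finset.sum_filter_of_ne fun i _ h ↦ ⟨by simpa using h⟩
  have : (⨅ i ∈ T, L i).FiniteIndex := finiteIndex_iInf' _ fun i hi ↦ (Finset.mem_filter.1 hi).2
  set D := (⨅ i ∈ T, L i).normalCore
  set π := QuotientAddGroup.mk' D
  have hπ : Function.Surjective π := QuotientAddGroup.mk'_surjective D
  have hker : ∀ i ∈ T, π.ker ≤ L i := fun i hi ↦ by
    rw [QuotientAddGroup.ker_mk']
    exact (normalCore_le _).trans (biInf_le L hi)
  have hpre : ∀ i ∈ T, π ⁻¹' (π (d i) +ᵥ ((L i).map π : Set _)) = d i +ᵥ (L i : Set G) :=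
    fun i hi ↦ preimage_vadd_map_eq_vadd π (hker i hi) (d i)
  rw [← hsum]
  calc ∑ i ∈ T, ((L i).index : ℚ)⁻¹ = ∑ i ∈ T, (((L i).map π).index : ℚ)⁻¹ :=
        Finset.sum_congr rfl fun i hi ↦ by rw [index_map_eq _ hπ (hker i hi)]
    _ < 1 := by
        refine sum_inv_index_lt_one_of_pairwiseDisjoint_of_finite (d := fun i ↦ π (d i)) (y := π y)
          (fun i hi j hj hij ↦ Disjoint.of_preimage hπ ?_) ?_
        · rw [hpre i hi, hpre j hj]
          exact hdisj (Finset.filter_subset _ s hi) (Finset.filter_subset _ s hj) hij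
        · simp only [Set.mem_iUnion, not_exists]
          intro i hi hyi
          rw [← Set.mem_preimage, hpre i hi] at hyi
          exact hy (Set.mem_biUnion (Finset.filter_subset _ s hi) hyi)

theorem sum_inv_index_lt_one_iff_biUnion_ne_univ {C : ι → Set G}
    (hC : ∀ i ∈ s, ∃ g : G, C i = g +ᵥ (L i : Set G)) (hdisj : (s : Set ι).PairwiseDisjoint C) :
    ∑ i ∈ s, ((L i).index : ℚ)⁻¹ < 1 ↔ ⋃ i ∈ s, C i ≠ Set.univ := by
  choose! d hd using hC
  rw [Set.iUnion₂_congr hd]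
  refine ⟨fun h hcov ↦ h.not_ge (one_le_sum_inv_index_of_leftCoset_cover hcov), fun h ↦ ?_⟩
  obtain ⟨y, hy⟩ := (Set.ne_univ_iff_exists_notMem _).mp h
  refine sum_inv_index_lt_one_of_pairwiseDisjoint (fun i hi j hj hij ↦ ?_) hy
  have := hdisj hi hj hij
  rwa [Function.onFun, hd i hi, hd j hj] at this

theorem le_of_add_singleton_subset {H H₀ : AddSubgroup G} {a a₀ : G}
    (h : (H : Set G) + {a} ⊆ (H₀ : Set G) + {a₀}) : H ≤ H₀ := by
  have hmem {y : G} (hy : y - a ∈ H) : y - a₀ ∈ H₀ :=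
    Set.mem_add_singleton_iff_sub_mem.1 (h (Set.mem_add_singleton_iff_sub_mem.2 hy))
  have ha : a - a₀ ∈ H₀ := hmem (by simp)
  intro g hg
  have := sub_mem (hmem (y := g + a) (by simpa using hg)) ha
  rwa [sub_sub_sub_cancel_right, add_sub_cancel_right] at this

theorem inf_relIndex_inf_of_le {H H₀ : AddSubgroup G} (K : AddSubgroup G) (h : H ≤ H₀) :
    (H ⊓ K).relIndex (H₀ ⊓ K) = H.relIndex (H₀ ⊓ K) := by
  rw [← inf_relIndex_right H, ← inf_assoc, inf_of_le_left h]

end AddGroup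

section AddCommGroup

variable {G : Type*} [AddCommGroup G]

theorem mem_add_iff_exists_add_mem {H₀ G' : AddSubgroup G} {X : Set G} {a₀ c x : G}
    (hX : X ⊆ (H₀ : Set G) + {a₀}) (hc : c - a₀ ∈ H₀) (hxc : x - c ∈ G') :
    x ∈ X + (G' : Set G) ↔ ∃ k : ↥(H₀ ⊓ G'), c + (k : G) ∈ X := by
  constructor
  · rw [Set.mem_add]
    rintro ⟨y, hy, g, hg : g ∈ G', rfl⟩
    have hy₀ : y - a₀ ∈ H₀ := Set.mem_add_singleton_iff_sub_mem.1 (hX hy)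
    refine ⟨⟨y - c, mem_inf.2 ⟨?_, ?_⟩⟩, by simpa using hy⟩
    · simpa using sub_mem hy₀ hc
    · convert sub_mem hxc hg using 1; abel
  · rintro ⟨k, hk⟩
    refine ⟨c + k, hk, x - (c + k), ?_, add_sub_cancel _ _⟩
    simpa [sub_add_eq_sub_sub] using sub_mem hxc (mem_inf.1 k.2).2

theorem preimage_add_add_singleton_eq_vadd {H K : AddSubgroup G} {c a : G} {k₀ : K}
    (h₀ : c + (k₀ : G) ∈ (H : Set G) + {a}) :
    (fun k : K ↦ c + (k : G)) ⁻¹' ((H : Set G) + {a}) = k₀ +ᵥ (H.addSubgroupOf K : Set K) := by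
  ext k
  rw [Set.mem_add_singleton_iff_sub_mem, SetLike.mem_coe] at h₀
  simp only [Set.mem_preimage, Set.mem_add_singleton_iff_sub_mem,
    Set.mem_vadd_set_iff_neg_vadd_mem, vadd_eq_add, SetLike.mem_coe, mem_addSubgroupOf, coe_add,
    coe_neg]
  rw [show c + k - a = (c + k₀ - a) + (-k₀ + k) by abel, add_mem_cancel_left h₀]

end AddCommGroup

end AddSubgroup

/-- Let `G` be an abelian group, `G'` a subgroup, and
`H₀ + a₀, H₁ + a₁, …, H_ν + a_ν` cosets of subgroups such that `Hᵢ + aᵢ ⊆ H₀ + a₀`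
for `i ≥ 1` and the cosets `Hᵢ + aᵢ` (`i ≥ 1`) are pairwise disjoint. Set
`X = (H₀ + a₀) \ ⋃ᵢ (Hᵢ + aᵢ)`. Then `x ∈ X + G'` iff `x - a₀ ∈ H₀ + G'` and the sum
of `((H₀ ∩ G') : (Hᵢ ∩ G'))⁻¹` over those `i` with `x - aᵢ ∈ Hᵢ + G'` is `< 1`
(indices are in `ℕ ∪ {∞}`, encoded by `AddSubgroup.relindex` with `0 = ∞`, so that
`∞⁻¹ = 0` holds in `ℚ`). -/
theorem mem_diff_add_subgroup_iff {G : Type*} [AddCommGroup G]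
    (G' : AddSubgroup G) (ν : ℕ)
    (H₀ : AddSubgroup G) (a₀ : G) (H : Fin ν → AddSubgroup G) (a : Fin ν → G)
    (hsub : ∀ i, (H i : Set G) + {a i} ⊆ (H₀ : Set G) + {a₀})
    (hdisj : ∀ i j, i ≠ j → ((H i : Set G) + {a i}) ∩ ((H j : Set G) + {a j}) = ∅)
    (x : G) :
    x ∈ (((H₀ : Set G) + {a₀}) \ ⋃ i, ((H i : Set G) + {a i})) + (G' : Set G) ↔
      x - a₀ ∈ (H₀ : Set G) + (G' : Set G) ∧
      (∑ i : Fin ν, if x - a i ∈ (H i : Set G) + (G' : Set G)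
          then ((((H i ⊓ G').relIndex (H₀ ⊓ G')) : ℚ))⁻¹ else 0) < 1 := by
  rw [Set.sub_mem_add_iff_mem_add_singleton_add]
  by_cases h₀ : x ∈ (H₀ : Set G) + {a₀} + G'
  swap
  · exact iff_of_false (fun hx ↦ h₀ (Set.add_subset_add_right Set.sdiff_subset hx)) (h₀ ·.1)
  obtain ⟨c, hc, g₀, hg₀ : g₀ ∈ G', rfl⟩ := Set.mem_add.1 h₀
  have hc₀ : c - a₀ ∈ H₀ := Set.mem_add_singleton_iff_sub_mem.1 hc
  have hshift {Y : Set G} (hY : Y ⊆ (H₀ : Set G) + {a₀}) :=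
    AddSubgroup.mem_add_iff_exists_add_mem (x := c + g₀) hY hc₀ (by simpa using hg₀)
  set C : Fin ν → Set ↥(H₀ ⊓ G') := fun i ↦
    (fun k : ↥(H₀ ⊓ G') ↦ c + (k : G)) ⁻¹' ((H i : Set G) + {a i})
  set T := Finset.univ.filter fun i ↦ c + g₀ - a i ∈ (H i : Set G) + (G' : Set G)
  have hT i : i ∈ T ↔ ∃ k, k ∈ C i := by
    rw [Finset.mem_filter, Set.sub_mem_add_iff_mem_add_singleton_add, hshift (hsub i)]
    simp [C]
  have hrelIndex i : (H i ⊓ G').relIndex (H₀ ⊓ G') = ((H i).addSubgroupOf (H₀ ⊓ G')).index :=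
    AddSubgroup.inf_relIndex_inf_of_le G' (AddSubgroup.le_of_add_singleton_subset (hsub i))
  simp only [hrelIndex]
  rw [hshift Set.sdiff_subset, and_iff_right h₀, ← Finset.sum_filter,
    AddSubgroup.sum_inv_index_lt_one_iff_biUnion_ne_univ (C := C)
      (fun i hi ↦ ?_) (fun i _ j _ hij ↦ ?_)]
  · rw [Set.ne_univ_iff_exists_notMem]
    refine exists_congr fun k ↦ ?_
    have hk : c + (k : G) ∈ (H₀ : Set G) + {a₀} := by
      rw [Set.mem_add_singleton_iff_sub_mem, add_sub_right_comm]
      exact add_mem hc₀ (AddSubgroup.mem_inf.1 k.2).1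
    simp only [Set.mem_sdiff, hk, true_and, Set.mem_iUnion, not_exists]
    exact forall_congr' fun i ↦ ⟨fun h _ ↦ h, fun h hki ↦ h ((hT i).2 ⟨k, hki⟩) hki⟩
  · obtain ⟨k₀, hk₀⟩ := (hT i).1 hi
    exact ⟨k₀, AddSubgroup.preimage_add_add_singleton_eq_vadd hk₀⟩
  · exact (Set.disjoint_iff_inter_eq_empty.2 (hdisj i j hij)).preimage _
end
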